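/- Let E be an equivalence relation on a set X and let [Y]_E denote the E-saturation of Y ⊆ X. For any subsets A, B ⊆ X with [A]_E ∩ [B]_E ≠ ∅, the sets A' = A ∩ [B]_E and B' = B ∩ [A]_E are nonempty and satisfy [A']_E = [B']_E. -/

import Mathlib

def sat {X : Type*} (E : X → X → Prop) (Y : Set X) : Set X :=
  {x | ∃ y ∈ Y, E x y}

section Saturation

variable {X : Type*} {E : X → X → Prop}

theorem Set.Nonempty.of_sat {Y : Set X} (h : (sat E Y).Nonempty) : Y.Nonempty :=
  let ⟨_, y, hy, _⟩ := h
  ⟨y, hy⟩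

theorem sat_inter_sat (hE : Equivalence E) (A B : Set X) :
    sat E (A ∩ sat E B) = sat E A ∩ sat E B := by
  ext z
  constructor
  · rintro ⟨a, ⟨ha, b, hb, hab⟩, hza⟩
    exact ⟨⟨a, ha, hza⟩, b, hb, hE.trans hza hab⟩
  · rintro ⟨⟨a, ha, hza⟩, b, hb, hzb⟩
    exact ⟨a, ⟨ha, b, hb, hE.trans (hE.symm hza) hzb⟩, hza⟩

end Saturation

/-- Saturated subcondition lemma: if `[A]_E ∩ [B]_E ≠ ∅` then
`A' = A ∩ [B]_E` and `B' = B ∩ [A]_E` are nonempty with `[A']_E = [B']_E`. -/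
theorem saturated_subcondition
    {X : Type*} (E : X → X → Prop) (hE : Equivalence E)
    (A B : Set X) (h : (sat E A ∩ sat E B).Nonempty) :
    (A ∩ sat E B).Nonempty ∧ (B ∩ sat E A).Nonempty ∧
      sat E (A ∩ sat E B) = sat E (B ∩ sat E A) := by
  have hAB := sat_inter_sat hE A B
  have hBA := sat_inter_sat hE B A
  rw [Set.inter_comm (sat E B)] at hBA
  exact ⟨(hAB ▸ h).of_sat, (hBA ▸ h).of_sat, hAB.trans hBA.symm⟩
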